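/- If Z is a subgraph of a finite undirected graph Y, then α(Z) ≤ α(Y), where α denotes the number of acyclic orientations. In particular α is monotone under adding edges. -/

import Mathlib

/-!
Restricting an acyclic orientation of `Y` to the edges of `Z` gives an acyclic orientation of
`Z`, and every acyclic orientation of `Z` arises this way: extend its reachability order to a
linear order on the vertices and orient every edge of `Y` upwards. So restriction is a surjection
from the acyclic orientations of `Y` onto those of `Z`.
-/

/-- An orientation of a simple graph `Y`. -/
structure Orient {n : ℕ} (Y : SimpleGraph (Fin n)) where
  dir : Fin n → Fin n → Prop
  dir_adj : ∀ i j, dir i j → Y.Adj i j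
  dir_iff : ∀ i j, Y.Adj i j → (dir i j ↔ ¬ dir j i)

/-- An orientation is acyclic if it induces no directed cycle. -/
def IsAcyc {n : ℕ} {Y : SimpleGraph (Fin n)} (o : Orient Y) : Prop :=
  ∀ v, ¬ Relation.TransGen o.dir v v

namespace Orient

variable {n : ℕ} {Z Y : SimpleGraph (Fin n)}

lemma ext {o₁ o₂ : Orient Y} (h : o₁.dir = o₂.dir) : o₁ = o₂ := by
  cases o₁; cases o₂; simp_all

instance : Finite (Orient Y) :=
  Finite.of_injective Orient.dir fun _ _ => ext

def restrict (o : Orient Y) (hZY : Z ≤ Y) : Orient Z where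
  dir i j := Z.Adj i j ∧ o.dir i j
  dir_adj _ _ h := h.1
  dir_iff i j hZ := by
    simp only [hZ, hZ.symm, true_and]
    exact o.dir_iff i j (hZY hZ)

def ofLinearOrder (Y : SimpleGraph (Fin n)) (s : Fin n → Fin n → Prop) [IsLinearOrder (Fin n) s] :
    Orient Y where
  dir i j := Y.Adj i j ∧ s i j
  dir_adj _ _ h := h.1
  dir_iff i j hY := by
    refine ⟨fun hij hji => hY.ne (antisymm hij.2 hji.2), fun h => ⟨hY, ?_⟩⟩
    exact (total_of s i j).resolve_right fun hji => h ⟨hY.symm, hji⟩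

end Orient

section Acyclic

variable {n : ℕ} {Z Y : SimpleGraph (Fin n)}

lemma isAcyc_of_dir_le {o : Orient Y} {r : Fin n → Fin n → Prop} [IsTrans (Fin n) r]
    [Std.Irrefl r] (h : o.dir ≤ r) : IsAcyc o := fun v hv =>
  irrefl v (Relation.transGen_eq_self (r := r) ▸ Relation.TransGen.mono h v v hv)

lemma IsAcyc.restrict {o : Orient Y} (ho : IsAcyc o) (hZY : Z ≤ Y) :
    IsAcyc (o.restrict hZY) := fun v hv =>
  ho v (Relation.TransGen.mono (fun _ _ h => h.2) v v hv)

lemma isAcyc_ofLinearOrder (s : Fin n → Fin n → Prop) [IsLinearOrder (Fin n) s] :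
    IsAcyc (Orient.ofLinearOrder Y s) := by
  let lt : Fin n → Fin n → Prop := fun a b => s a b ∧ a ≠ b
  have : IsTrans (Fin n) lt := ⟨fun a b c hab hbc =>
    ⟨_root_.trans hab.1 hbc.1, fun hac => hab.2 (antisymm hab.1 (hac ▸ hbc.1))⟩⟩
  have : Std.Irrefl lt := ⟨fun a h => h.2 rfl⟩
  exact isAcyc_of_dir_le (r := lt) fun i j h => ⟨h.2, h.1.ne⟩

lemma IsAcyc.exists_linearOrder_le {o : Orient Z} (ho : IsAcyc o) :
    ∃ s : Fin n → Fin n → Prop, IsLinearOrder (Fin n) s ∧ o.dir ≤ s := by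
  have : IsPartialOrder (Fin n) (Relation.ReflTransGen o.dir) :=
    { refl := fun _ => Relation.ReflTransGen.refl
      trans := fun _ _ _ => Relation.ReflTransGen.trans
      antisymm := fun a b hab hba => by
        rcases Relation.reflTransGen_iff_eq_or_transGen.1 hab with rfl | hab
        · rfl
        rcases Relation.reflTransGen_iff_eq_or_transGen.1 hba with rfl | hba
        · rfl
        exact absurd (hab.trans hba) (ho a) }
  obtain ⟨s, hs, hle⟩ := extend_partialOrder (Relation.ReflTransGen o.dir)
  exact ⟨s, hs, fun i j h => hle i j (Relation.ReflTransGen.single h)⟩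

lemma Orient.restrict_ofLinearOrder {o : Orient Z} (hZY : Z ≤ Y) {s : Fin n → Fin n → Prop}
    [IsLinearOrder (Fin n) s] (hos : o.dir ≤ s) :
    (Orient.ofLinearOrder Y s).restrict hZY = o := by
  refine Orient.ext (funext₂ fun i j => propext ⟨fun ⟨hZ, _, hs⟩ => ?_, fun h => ?_⟩)
  · by_contra hij
    have hji : o.dir j i := by_contra fun hji => hij ((o.dir_iff i j hZ).2 hji)
    exact hZ.ne (antisymm hs (hos j i hji))
  · have hZ := o.dir_adj i j h
    exact ⟨hZ, hZY hZ, hos i j h⟩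

lemma surjective_restrict (hZY : Z ≤ Y) :
    Function.Surjective fun p : {p : Orient Y // IsAcyc p} =>
      (⟨p.1.restrict hZY, p.2.restrict hZY⟩ : {o : Orient Z // IsAcyc o}) := by
  rintro ⟨o, ho⟩
  obtain ⟨s, hs, hos⟩ := ho.exists_linearOrder_le
  exact ⟨⟨_, isAcyc_ofLinearOrder s⟩, Subtype.ext (Orient.restrict_ofLinearOrder hZY hos)⟩

end Acyclic

/-- If `Z` is a subgraph of `Y` (on the same vertex set), then the number of
acyclic orientations satisfies `α(Z) ≤ α(Y)`. -/
theorem stmt8 {n : ℕ} (Z Y : SimpleGraph (Fin n)) (hZY : Z ≤ Y) :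
    Nat.card {o : Orient Z // IsAcyc o} ≤ Nat.card {o : Orient Y // IsAcyc o} :=
  Nat.card_le_card_of_surjective _ (surjective_restrict hZY)
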